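/- Let K, G : [0,∞) → ℝ be continuous functions with K(t) ≥ G(t) for all t ≥ 0, and let f, m : [0,∞) → ℝ be twice differentiable functions satisfying f''(t) + K(t)·f(t) = 0 with f(0) = 1 and f'(0) < 0, and m''(t) + G(t)·m(t) = 0 with m(0) = 1 and m'(0) = 0. If m(t) > 0 for all t ∈ (0,∞) and ∫₀^∞ 1/m(t)² dt = ∞, then there exists t₀ ∈ (0,∞) such that f(t) > 0 for all t ∈ [0,t₀) and f(t₀) = 0. -/

import Mathlib

/-!
Suppose `f > 0` on `[0, ∞)`. Since `G ≤ K`, the Wronskian `W = m f' - m' f` has derivative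
`(G - K) m f ≤ 0`, so `W ≤ W(0) = f'(0) < 0`. As `(f / m)' = W / m²`, integrating gives
`0 < f(b) / m(b) ≤ 1 + f'(0) ∫₀ᵇ m⁻²`, so the integrals `∫₀ᵇ m⁻²` stay below `1 / (-f'(0))`,
contradicting `∫₀^∞ m⁻² = ∞`. Hence `f` vanishes somewhere, and its first zero is `t₀`.
-/

open Set MeasureTheory Filter

noncomputable def wronskian (u v : ℝ → ℝ) (t : ℝ) : ℝ := u t * deriv v t - deriv u t * v t

theorem hasDerivAt_wronskian {u v : ℝ → ℝ} {t : ℝ} (hu : DifferentiableAt ℝ u t)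
    (hu' : DifferentiableAt ℝ (deriv u) t) (hv : DifferentiableAt ℝ v t)
    (hv' : DifferentiableAt ℝ (deriv v) t) :
    HasDerivAt (wronskian u v) (u t * deriv (deriv v) t - deriv (deriv u) t * v t) t :=
  ((hu.hasDerivAt.mul hv'.hasDerivAt).sub (hu'.hasDerivAt.mul hv.hasDerivAt)).congr_deriv
    (by ring)

theorem hasDerivAt_div_eq_wronskian {u v : ℝ → ℝ} {t : ℝ} (hu : DifferentiableAt ℝ u t)
    (hv : DifferentiableAt ℝ v t) (hut : u t ≠ 0) :
    HasDerivAt (fun s => v s / u s) (wronskian u v t / u t ^ 2) t :=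
  (hv.hasDerivAt.div hu.hasDerivAt hut).congr_deriv (by rw [wronskian]; ring)

theorem antitoneOn_wronskian {K G f m : ℝ → ℝ} {a : ℝ} (hKG : ∀ t ≥ a, G t ≤ K t)
    (hfd : ∀ t ≥ a, DifferentiableAt ℝ f t) (hfd' : ∀ t ≥ a, DifferentiableAt ℝ (deriv f) t)
    (hmd : ∀ t ≥ a, DifferentiableAt ℝ m t) (hmd' : ∀ t ≥ a, DifferentiableAt ℝ (deriv m) t)
    (hfode : ∀ t ≥ a, deriv (deriv f) t + K t * f t = 0)
    (hmode : ∀ t ≥ a, deriv (deriv m) t + G t * m t = 0) (hmf : ∀ t ≥ a, 0 ≤ m t * f t) :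
    AntitoneOn (wronskian m f) (Ici a) := by
  have hW : ∀ t ≥ a, HasDerivAt (wronskian m f) ((G t - K t) * (m t * f t)) t := fun t ht =>
    (hasDerivAt_wronskian (hmd t ht) (hmd' t ht) (hfd t ht) (hfd' t ht)).congr_deriv
      (by linear_combination m t * hfode t ht - f t * hmode t ht)
  refine antitoneOn_of_hasDerivWithinAt_nonpos (convex_Ici a)
    (fun t ht => (hW t ht).continuousAt.continuousWithinAt)
    (fun t ht => (hW t (interior_subset ht)).hasDerivWithinAt) fun t ht => ?_
  have ht : a ≤ t := interior_subset ht
  exact mul_nonpos_of_nonpos_of_nonneg (sub_nonpos.2 (hKG t ht)) (hmf t ht)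

/-- Integrated quotient rule `(v / u)' = W(u, v) / u²`. -/
theorem div_sub_div_le_mul_integral_inv_sq {u v : ℝ → ℝ} {a b c : ℝ} (hab : a ≤ b)
    (hu : ∀ t ∈ Icc a b, DifferentiableAt ℝ u t) (hv : ∀ t ∈ Icc a b, DifferentiableAt ℝ v t)
    (hu0 : ∀ t ∈ Icc a b, u t ≠ 0) (hW : ∀ t ∈ Ioo a b, wronskian u v t ≤ c) :
    v b / u b - v a / u a ≤ c * ∫ t in a..b, 1 / u t ^ 2 := by
  have hu_cont : ContinuousOn u (Icc a b) := fun t ht => (hu t ht).continuousAt.continuousWithinAt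
  have hv_cont : ContinuousOn v (Icc a b) := fun t ht => (hv t ht).continuousAt.continuousWithinAt
  rw [← intervalIntegral.integral_const_mul]
  refine intervalIntegral.sub_le_integral_of_hasDeriv_right_of_le hab (hv_cont.div hu_cont hu0)
    (fun t ht => (hasDerivAt_div_eq_wronskian (hu t (Ioo_subset_Icc_self ht))
      (hv t (Ioo_subset_Icc_self ht)) (hu0 t (Ioo_subset_Icc_self ht))).hasDerivWithinAt)
    (continuousOn_const.mul (continuousOn_const.div (hu_cont.pow 2)
      fun t ht => pow_ne_zero 2 (hu0 t ht))).integrableOn_Icc fun t ht => ?_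
  rw [mul_one_div]
  exact div_le_div_of_nonneg_right (hW t ht) (sq_nonneg _)

theorem lintegral_ofReal_ne_top_of_intervalIntegral_le {g : ℝ → ℝ} {a C : ℝ}
    (hg : ContinuousOn g (Ici a)) (hg0 : ∀ t ≥ a, 0 ≤ g t)
    (hC : ∀ b ≥ a, ∫ t in a..b, g t ≤ C) :
    ∫⁻ t in Ioi a, ENNReal.ofReal (g t) ≠ ⊤ := by
  refine (Integrable.lintegral_lt_top ?_).ne
  refine integrableOn_Ioi_of_intervalIntegral_norm_bounded C a (l := atTop)
    (fun b => ((hg.mono Icc_subset_Ici_self).integrableOn_Icc).mono_set Ioc_subset_Icc_self)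
    tendsto_id ?_
  filter_upwards [eventually_ge_atTop a] with b hb
  refine (intervalIntegral.integral_congr fun t ht => ?_).trans_le (hC b hb)
  exact Real.norm_of_nonneg (hg0 t ((inf_eq_left.2 hb).symm.le.trans ht.1))

theorem exists_first_zero_of_continuousOn {f : ℝ → ℝ} {a b : ℝ} (hab : a ≤ b)
    (hf : ContinuousOn f (Icc a b)) (ha : 0 < f a) (hb : f b ≤ 0) :
    ∃ t₀ ∈ Ioc a b, (∀ t ∈ Ico a t₀, 0 < f t) ∧ f t₀ = 0 := by
  set S := Icc a b ∩ f ⁻¹' Iic 0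
  have hS_bdd : BddBelow S := ⟨a, fun t ht => ht.1.1⟩
  have ht₀ : sInf S ∈ S :=
    (hf.preimage_isClosed_of_isClosed isClosed_Icc isClosed_Iic).csInf_mem
      ⟨b, ⟨hab, le_rfl⟩, hb⟩ hS_bdd
  have hpos : ∀ t ∈ Ico a (sInf S), 0 < f t := fun t ht => by
    by_contra! hft
    exact (csInf_le hS_bdd ⟨⟨ht.1, ht.2.le.trans ht₀.1.2⟩, hft⟩).not_gt ht.2
  obtain ⟨s, hs, hfs⟩ := intermediate_value_Icc' ht₀.1.1 (hf.mono (Icc_subset_Icc_right ht₀.1.2))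
    ⟨ht₀.2, ha.le⟩
  have hs_eq : s = sInf S :=
    hs.2.antisymm (csInf_le hS_bdd ⟨⟨hs.1, hs.2.trans ht₀.1.2⟩, hfs.le⟩)
  have ha_lt : a < sInf S := ht₀.1.1.lt_of_ne fun h => (h ▸ ha).not_ge ht₀.2
  exact ⟨sInf S, ⟨ha_lt, ht₀.1.2⟩, hpos, hs_eq ▸ hfs⟩

theorem integral_inv_sq_le_of_forall_pos {K G f m : ℝ → ℝ} (hKG : ∀ t ≥ (0:ℝ), G t ≤ K t)
    (hfd : ∀ t ≥ (0:ℝ), DifferentiableAt ℝ f t)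
    (hfd' : ∀ t ≥ (0:ℝ), DifferentiableAt ℝ (deriv f) t)
    (hmd : ∀ t ≥ (0:ℝ), DifferentiableAt ℝ m t)
    (hmd' : ∀ t ≥ (0:ℝ), DifferentiableAt ℝ (deriv m) t)
    (hfode : ∀ t ≥ (0:ℝ), deriv (deriv f) t + K t * f t = 0)
    (hf0 : f 0 = 1) (hf'0 : deriv f 0 < 0)
    (hmode : ∀ t ≥ (0:ℝ), deriv (deriv m) t + G t * m t = 0)
    (hm0 : m 0 = 1) (hm'0 : deriv m 0 = 0)
    (hf : ∀ t ≥ (0:ℝ), 0 < f t) (hm : ∀ t ≥ (0:ℝ), 0 < m t) {b : ℝ} (hb : 0 ≤ b) :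
    ∫ t in (0:ℝ)..b, 1 / m t ^ 2 ≤ 1 / -deriv f 0 := by
  have hW0 : wronskian m f 0 = deriv f 0 := by simp [wronskian, hm0, hm'0]
  have hW := antitoneOn_wronskian hKG hfd hfd' hmd hmd' hfode hmode
    fun t ht => (mul_pos (hm t ht) (hf t ht)).le
  have h := div_sub_div_le_mul_integral_inv_sq hb (fun t ht => hmd t ht.1) (fun t ht => hfd t ht.1)
    (fun t ht => (hm t ht.1).ne') fun t ht => hW0 ▸ hW self_mem_Ici (mem_Ici.2 ht.1.le) ht.1.le
  rw [hf0, hm0, div_one] at h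
  rw [le_div_iff₀ (neg_pos.2 hf'0)]
  nlinarith [div_pos (hf b hb) (hm b hb)]

theorem odeComparison_exists_zero_of_integral_div_sq_eq_top_general
    (K G f m : ℝ → ℝ)
    (hKG : ∀ t ≥ (0:ℝ), G t ≤ K t)
    (hfd : ∀ t ≥ (0:ℝ), DifferentiableAt ℝ f t)
    (hfd' : ∀ t ≥ (0:ℝ), DifferentiableAt ℝ (deriv f) t)
    (hmd : ∀ t ≥ (0:ℝ), DifferentiableAt ℝ m t)
    (hmd' : ∀ t ≥ (0:ℝ), DifferentiableAt ℝ (deriv m) t)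
    (hfode : ∀ t ≥ (0:ℝ), deriv (deriv f) t + K t * f t = 0)
    (hf0 : f 0 = 1) (hf'0 : deriv f 0 < 0)
    (hmode : ∀ t ≥ (0:ℝ), deriv (deriv m) t + G t * m t = 0)
    (hm0 : m 0 = 1) (hm'0 : deriv m 0 = 0)
    (hmpos : ∀ t > (0:ℝ), 0 < m t)
    (hint : ∫⁻ t in Ioi (0:ℝ), ENNReal.ofReal (1 / (m t) ^ 2) = ⊤) :
    ∃ t₀ > (0:ℝ), (∀ t, 0 ≤ t → t < t₀ → 0 < f t) ∧ f t₀ = 0 := by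
  have hm : ∀ t ≥ (0:ℝ), 0 < m t := fun t ht =>
    ht.eq_or_lt.elim (fun h => h ▸ hm0 ▸ one_pos) (hmpos t)
  obtain ⟨T, hT, hfT⟩ : ∃ T ≥ (0:ℝ), f T ≤ 0 := by
    by_contra! hf
    refine lintegral_ofReal_ne_top_of_intervalIntegral_le ?_ (fun t ht => by positivity)
      (fun b hb => integral_inv_sq_le_of_forall_pos hKG hfd hfd' hmd hmd' hfode hf0 hf'0
        hmode hm0 hm'0 hf hm hb) hint
    have hm_cont : ContinuousOn m (Ici 0) := fun t ht => (hmd t ht).continuousAt.continuousWithinAt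
    exact continuousOn_const.div (hm_cont.pow 2) fun t ht => pow_ne_zero 2 (hm t ht).ne'
  obtain ⟨t₀, ⟨ht₀, -⟩, hpos, hzero⟩ := exists_first_zero_of_continuousOn hT
    (fun t ht => (hfd t ht.1).continuousAt.continuousWithinAt) (hf0 ▸ one_pos) hfT
  exact ⟨t₀, ht₀, fun t ht htt => hpos t ⟨ht, htt⟩, hzero⟩

/-- Lemma 6.1 (L–2): ODE comparison forcing a zero of `f`. -/
theorem odeComparison_exists_zero_of_integral_div_sq_eq_top
    (K G f m : ℝ → ℝ)
    (hK : ContinuousOn K (Ici 0)) (hG : ContinuousOn G (Ici 0))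
    (hKG : ∀ t ≥ (0:ℝ), G t ≤ K t)
    (hfd : ∀ t ≥ (0:ℝ), DifferentiableAt ℝ f t)
    (hfd' : ∀ t ≥ (0:ℝ), DifferentiableAt ℝ (deriv f) t)
    (hmd : ∀ t ≥ (0:ℝ), DifferentiableAt ℝ m t)
    (hmd' : ∀ t ≥ (0:ℝ), DifferentiableAt ℝ (deriv m) t)
    (hfode : ∀ t ≥ (0:ℝ), deriv (deriv f) t + K t * f t = 0)
    (hf0 : f 0 = 1) (hf'0 : deriv f 0 < 0)
    (hmode : ∀ t ≥ (0:ℝ), deriv (deriv m) t + G t * m t = 0)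
    (hm0 : m 0 = 1) (hm'0 : deriv m 0 = 0)
    (hmpos : ∀ t > (0:ℝ), 0 < m t)
    (hint : ∫⁻ t in Ioi (0:ℝ), ENNReal.ofReal (1 / (m t) ^ 2) = ⊤) :
    ∃ t₀ > (0:ℝ), (∀ t, 0 ≤ t → t < t₀ → 0 < f t) ∧ f t₀ = 0 :=
  odeComparison_exists_zero_of_integral_div_sq_eq_top_general K G f m hKG hfd hfd' hmd hmd' hfode
    hf0 hf'0 hmode hm0 hm'0 hmpos hint
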